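/- Let u be the one-sided fixed point of the Fibonacci substitution S(a)=ab, S(b)=a. Call a finite subword w of u repeatable if the bi-infinite periodic sequence with unit cell w is a shift of the bi-infinite periodic sequence with unit cell u₀u₁⋯u_{|w|−1}. Let w be any subword of u with |w| = F_k ≥ 2, and write w = w₁ w₂ with |w₁| = F_{k-1}. Then either w is repeatable, or w₁ is repeatable. -/

import Mathlib

/-!
Put `n = k - 2`. Since `u = S^(n+1)(u)`, the word `u` is a concatenation of the blocks
`A = S^(n+1)(a)`, of length `F_k`, and `B = S^n(a)`, of length `F_{k-1}`, arranged like the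
letters of `u`; as `u` has no factor `bb`, every `B` sits between two `A`s. Because `AB` and
`BA` differ only in their last two letters, the prefix of `u` of length `F_k + F_{k+1} - 2` has
period `F_k`, and the prefix `ABA` of `u` reappears wherever the letters `aba` occur. Hence a factor
of length `F_k` is a cyclic rotation of `u₀⋯u_{F_k-1}`, unless it starts at the last letter of a
`B`; then its first `F_{k-1}` letters are the rotation of `B = u₀⋯u_{F_{k-1}-1}` that brings the
last letter to the front. A cyclic rotation of a prefix of `u` is repeatable.
-/

/-- The Fibonacci substitution words `S^k(a)` over the alphabet `{a, b}`, with `a = true`,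
`b = false`: `S^0(a) = a`, `S^1(a) = ab`, `S^{k+2}(a) = S^{k+1}(a) S^k(a)`.
Thus `fibWord (k-1)` is the word `W_k = S^{k-1}(a)`, of length `F_k`. -/
def fibWord : ℕ → List Bool
  | 0 => [true]
  | 1 => [true, false]
  | (k + 2) => fibWord (k + 1) ++ fibWord k

/-- The one-sided infinite fixed point `u = abaababaabaab…` of the Fibonacci substitution;
`fibWord (n + 2)` has length `> n` and all the words `fibWord k` are nested prefixes, so
this gives the `n`-th letter of `u`. -/
def uSeq (n : ℕ) : Bool := (fibWord (n + 2)).getD n true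

/-- `w` is a (finite) subword of `u`, i.e. a block of consecutive letters of `u`. -/
def subwordOfU (w : List Bool) : Prop :=
  ∃ i : ℕ, w = (List.range w.length).map fun j => uSeq (i + j)

/-- The bi-infinite periodic sequence with unit cell `w`. -/
def periodize (w : List Bool) (n : ℤ) : Bool :=
  w.getD (n % (w.length : ℤ)).toNat true

/-- `w` is repeatable: the bi-infinite periodic sequence with unit cell `w` is a shift of
the bi-infinite periodic sequence with unit cell `u₀u₁⋯u_{|w|−1}`. -/
def Repeatable (w : List Bool) : Prop :=
  ∃ s : ℤ, ∀ n : ℤ,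
    periodize w n = periodize ((List.range w.length).map uSeq) (n + s)

open List

theorem fibWord_add_two (n : ℕ) : fibWord (n + 2) = fibWord (n + 1) ++ fibWord n := rfl

theorem fibWord_length : ∀ n, (fibWord n).length = Nat.fib (n + 2)
  | 0 => rfl
  | 1 => rfl
  | n + 2 => by
    rw [fibWord_add_two, length_append, fibWord_length, fibWord_length,
      Nat.fib_add_two (n := n + 2), add_comm]

theorem fibWord_prefix_fibWord {m M : ℕ} (h : m ≤ M) : fibWord m <+: fibWord M := by
  induction M, h using Nat.le_induction with
  | base => exact prefix_rfl
  | succ M _ ih =>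
    refine ih.trans ?_
    cases M with
    | zero => exact ⟨[false], rfl⟩
    | succ M => exact prefix_append _ _

theorem getD_eq_of_prefix {α : Type*} {l₁ l₂ : List α} (h : l₁ <+: l₂) {n : ℕ}
    (hn : n < l₁.length) (d : α) : l₂.getD n d = l₁.getD n d := by
  obtain ⟨t, rfl⟩ := h
  exact getD_append _ _ _ _ hn

theorem lt_fib_add_two (n : ℕ) : n < Nat.fib (n + 2) := by
  induction n with
  | zero => decide
  | succ n ih =>
    have hpos : 0 < Nat.fib (n + 1) := Nat.fib_pos.mpr n.succ_pos
    have hfib : Nat.fib (n + 3) = Nat.fib (n + 1) + Nat.fib (n + 2) := Nat.fib_add_two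
    show n + 1 < Nat.fib (n + 3)
    omega

theorem uSeq_eq_getD {n m : ℕ} (h : n < (fibWord m).length) :
    uSeq n = (fibWord m).getD n true := by
  have hn : n < (fibWord (n + 2)).length := by
    rw [fibWord_length]; exact (lt_fib_add_two n).trans_le (Nat.fib_mono (by omega))
  rcases le_total m (n + 2) with hm | hm
  · exact getD_eq_of_prefix (fibWord_prefix_fibWord hm) h true
  · exact (getD_eq_of_prefix (fibWord_prefix_fibWord hm) hn true).symm

theorem map_range_uSeq {N m : ℕ} (h : N ≤ (fibWord m).length) :
    (range N).map uSeq = (fibWord m).take N := by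
  refine ext_getElem (by simpa using h) fun j hj _ => ?_
  rw [length_map, length_range] at hj
  rw [getElem_map, getElem_range, getElem_take, uSeq_eq_getD (m := m) (by omega), getD_eq_getElem]

/-- `fibBlock n` is the substitution `S^(n+1)` on letters. -/
def fibBlock (n : ℕ) (x : Bool) : List Bool := if x then fibWord (n + 1) else fibWord n

theorem length_fibBlock (n : ℕ) (x : Bool) :
    (fibBlock n x).length = if x then Nat.fib (n + 3) else Nat.fib (n + 2) := by
  cases x <;> simp [fibBlock, fibWord_length]

theorem length_fibBlock_pos (n : ℕ) (x : Bool) : 0 < (fibBlock n x).length := by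
  rw [length_fibBlock]; split <;> exact Nat.fib_pos.mpr (by omega)

theorem getD_fibBlock {n j : ℕ} {x : Bool} (hj : j < (fibBlock n x).length) :
    (fibBlock n x).getD j true = uSeq j := by
  cases x <;> exact (uSeq_eq_getD hj).symm

theorem flatMap_fibBlock_fibWord : ∀ m n, (fibWord m).flatMap (fibBlock n) = fibWord (m + n + 1)
  | 0, n => by simp [fibWord, fibBlock]
  | 1, n => by simp [fibWord, fibBlock, show 1 + n + 1 = n + 2 by omega, fibWord_add_two]
  | m + 2, n => by
    rw [fibWord_add_two, flatMap_append, flatMap_fibBlock_fibWord (m + 1),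
      flatMap_fibBlock_fibWord m, show m + 2 + n + 1 = m + n + 1 + 2 by omega, fibWord_add_two,
      show m + 1 + n + 1 = m + n + 1 + 1 by omega]

/-- Position in `u` where the image of the letter `u m` begins, when `u` is read as
`S^(n+1)(u)`. -/
def blockStart (n : ℕ) : ℕ → ℕ
  | 0 => 0
  | m + 1 => blockStart n m + (fibBlock n (uSeq m)).length

theorem blockStart_add_one (n m : ℕ) :
    blockStart n (m + 1) =
      blockStart n m + if uSeq m then Nat.fib (n + 3) else Nat.fib (n + 2) := by
  rw [blockStart, length_fibBlock]

theorem length_flatMap_fibBlock_map_range (n N : ℕ) :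
    (((range N).map uSeq).flatMap (fibBlock n)).length = blockStart n N := by
  induction N with
  | zero => rfl
  | succ N ih => simp [range_succ, ih, blockStart]

/-- `u = S^(n+1)(u)`, on prefixes. -/
theorem flatMap_fibBlock_map_range (n N : ℕ) :
    ((range N).map uSeq).flatMap (fibBlock n) = (range (blockStart n N)).map uSeq := by
  have hN : N ≤ (fibWord N).length := by rw [fibWord_length]; exact (lt_fib_add_two N).le
  have hpre : ((range N).map uSeq).flatMap (fibBlock n) <+: fibWord (N + n + 1) := by
    rw [← flatMap_fibBlock_fibWord, map_range_uSeq hN]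
    exact (take_prefix _ _).flatMap _
  have hlen := length_flatMap_fibBlock_map_range n N
  rw [prefix_iff_eq_take.mp hpre, hlen, map_range_uSeq (hlen ▸ hpre.length_le)]

theorem uSeq_blockStart_add_eq_getD {n m t s : ℕ}
    (hs : s < (((range t).map fun l => uSeq (m + l)).flatMap (fibBlock n)).length) :
    uSeq (blockStart n m + s) =
      (((range t).map fun l => uSeq (m + l)).flatMap (fibBlock n)).getD s true := by
  set X := ((range t).map fun l => uSeq (m + l)).flatMap (fibBlock n)
  have hsplit :
      (range (blockStart n (m + t))).map uSeq = (range (blockStart n m)).map uSeq ++ X := by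
    rw [← flatMap_fibBlock_map_range, ← flatMap_fibBlock_map_range, range_add, map_append,
      flatMap_append, map_map]
    rfl
  have hlt : blockStart n m + s < blockStart n (m + t) := by
    have := congrArg length hsplit
    simp only [length_map, length_range, length_append] at this
    omega
  calc uSeq (blockStart n m + s)
      = ((range (blockStart n (m + t))).map uSeq).getD (blockStart n m + s) true := by
        rw [getD_eq_getElem _ _ (by simpa using hlt)]; simp
    _ = X.getD s true := by rw [hsplit, getD_append_right _ _ _ _ (by simp)]; simp

theorem uSeq_blockStart_add {n m j : ℕ} (hj : j < (fibBlock n (uSeq m)).length) :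
    uSeq (blockStart n m + j) = uSeq j := by
  rw [uSeq_blockStart_add_eq_getD (t := 1) (by simpa using hj)]
  simpa using getD_fibBlock hj

theorem exists_blockStart_le_lt (n i : ℕ) :
    ∃ m, blockStart n m ≤ i ∧ i < blockStart n (m + 1) := by
  induction i with
  | zero => exact ⟨0, le_rfl, by simpa [blockStart] using length_fibBlock_pos n (uSeq 0)⟩
  | succ i ih =>
    obtain ⟨m, h₁, h₂⟩ := ih
    by_cases h : i + 1 < blockStart n (m + 1)
    · exact ⟨m, by omega, h⟩
    · refine ⟨m + 1, by omega, ?_⟩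
      have := length_fibBlock_pos n (uSeq (m + 1))
      simp only [blockStart] at h₂ ⊢
      omega

theorem uSeq_add_one_of_eq_false {p : ℕ} (h : uSeq p = false) : uSeq (p + 1) = true := by
  -- read `u` as `S(u)`, a concatenation of the blocks `ab` and `a`
  obtain ⟨m, hm, hm'⟩ := exists_blockStart_le_lt 0 p
  have hstart : ∀ q, uSeq (blockStart 0 q) = true := fun q => uSeq_blockStart_add (j := 0)
    (length_fibBlock_pos 0 _)
  have hp : p ≠ blockStart 0 m := fun hp => by rw [hp, hstart] at h; exact absurd h (by simp)
  have hlen : (fibBlock 0 (uSeq m)).length = if uSeq m then 2 else 1 := by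
    rw [length_fibBlock]; rfl
  simp only [blockStart] at hm'
  split at hlen
  · rw [show p + 1 = blockStart 0 (m + 1) by simp only [blockStart]; omega, hstart]
  · omega

theorem exists_eq_add_one_of_uSeq_eq_false {m : ℕ} (h : uSeq m = false) :
    ∃ m', m = m' + 1 ∧ uSeq m' = true := by
  obtain _ | m' := m
  · exact absurd h (by decide)
  · refine ⟨m', rfl, ?_⟩
    by_contra h'
    rw [uSeq_add_one_of_eq_false (Bool.eq_false_iff.mpr h')] at h
    exact absurd h (by simp)

theorem getD_fibWord_append_comm (n : ℕ) {i : ℕ}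
    (hi : i + 2 < Nat.fib (n + 2) + Nat.fib (n + 3)) :
    (fibWord (n + 1) ++ fibWord n).getD i true = (fibWord n ++ fibWord (n + 1)).getD i true := by
  induction n generalizing i with
  | zero =>
    obtain rfl : i = 0 := by simp [Nat.fib] at hi; omega
    rfl
  | succ n ih =>
    -- both words start with `fibWord (n + 1)`, and the rests are the words of the hypothesis
    rw [fibWord_add_two, append_assoc]
    rcases lt_or_ge i (fibWord (n + 1)).length with h | h
    · rw [getD_append _ _ _ _ h, getD_append _ _ _ _ h]
    · rw [getD_append_right _ _ _ _ h, getD_append_right _ _ _ _ h]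
      have hfib : Nat.fib (n + 4) = Nat.fib (n + 2) + Nat.fib (n + 3) := Nat.fib_add_two
      simp only [fibWord_length, Nat.add_assoc, Nat.reduceAdd] at h hi ⊢
      exact (ih (by omega)).symm

theorem uSeq_fib_add {n i : ℕ} (hi : i + 2 < Nat.fib (n + 2) + Nat.fib (n + 3)) :
    uSeq (Nat.fib (n + 3) + i) = uSeq i := by
  have hfib₄ : Nat.fib (n + 4) = Nat.fib (n + 2) + Nat.fib (n + 3) := Nat.fib_add_two
  have hfib₅ : Nat.fib (n + 5) = Nat.fib (n + 3) + Nat.fib (n + 4) := Nat.fib_add_two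
  have hW₃ : fibWord (n + 3) = fibWord (n + 1) ++ (fibWord n ++ fibWord (n + 1)) := by
    rw [fibWord_add_two, fibWord_add_two, append_assoc]
  have hlen₁ : (fibWord (n + 1)).length = Nat.fib (n + 3) := fibWord_length _
  have hlen₂ : (fibWord (n + 2)).length = Nat.fib (n + 4) := fibWord_length _
  have hlen₃ : (fibWord (n + 3)).length = Nat.fib (n + 5) := fibWord_length _
  rw [uSeq_eq_getD (m := n + 3) (by omega), hW₃, getD_append_right _ _ _ _ (by omega), hlen₁,
    Nat.add_sub_cancel_left, ← getD_fibWord_append_comm n hi, ← fibWord_add_two,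
    uSeq_eq_getD (m := n + 2) (by omega)]

theorem uSeq_eq_uSeq_mod {n p : ℕ} (hp : p + 2 < Nat.fib (n + 3) + Nat.fib (n + 4)) :
    uSeq p = uSeq (p % Nat.fib (n + 3)) := by
  induction p using Nat.strong_induction_on with
  | _ p ih =>
    rcases lt_or_ge p (Nat.fib (n + 3)) with h | h
    · rw [Nat.mod_eq_of_lt h]
    · have hfib : Nat.fib (n + 4) = Nat.fib (n + 2) + Nat.fib (n + 3) := Nat.fib_add_two
      have hpos : 0 < Nat.fib (n + 3) := Nat.fib_pos.mpr (by omega)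
      obtain ⟨i, rfl⟩ := Nat.exists_eq_add_of_le h
      rw [uSeq_fib_add (by omega), Nat.add_mod_left]
      exact ih i (by omega) (by omega)

theorem uSeq_blockStart_add_of_aa {n m s : ℕ} (h₀ : uSeq m = true) (h₁ : uSeq (m + 1) = true)
    (hs : s < 2 * Nat.fib (n + 3)) : uSeq (blockStart n m + s) = uSeq (s % Nat.fib (n + 3)) := by
  rcases lt_or_ge s (Nat.fib (n + 3)) with h | h
  · rw [uSeq_blockStart_add (by simp [length_fibBlock, h₀, h]), Nat.mod_eq_of_lt h]
  · obtain ⟨r, rfl⟩ := Nat.exists_eq_add_of_le h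
    have hstart : blockStart n (m + 1) = blockStart n m + Nat.fib (n + 3) := by
      rw [blockStart_add_one, if_pos h₀]
    rw [← add_assoc, ← hstart, uSeq_blockStart_add (by simp [length_fibBlock, h₁]; omega),
      Nat.add_mod_left, Nat.mod_eq_of_lt (by omega)]

/-- The prefix of `u` also begins with `aba`. -/
theorem uSeq_blockStart_add_of_aba {n m s : ℕ} (h₀ : uSeq m = true)
    (h₁ : uSeq (m + 1) = false) (h₂ : uSeq (m + 2) = true)
    (hs : s < 2 * Nat.fib (n + 3) + Nat.fib (n + 2)) :
    uSeq (blockStart n m + s) = uSeq s := by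
  have haba : ∀ q, uSeq q = true → uSeq (q + 1) = false → uSeq (q + 2) = true →
      (range 3).map (fun l => uSeq (q + l)) = [true, false, true] := by
    intro q h₀ h₁ h₂
    simp [range_succ, h₀, h₁, h₂]
  have hlen : s < (([true, false, true]).flatMap (fibBlock n)).length := by
    simp [length_fibBlock]; omega
  rw [uSeq_blockStart_add_eq_getD (t := 3) (by rwa [haba m h₀ h₁ h₂]), haba m h₀ h₁ h₂,
    ← haba 0 rfl rfl rfl, ← uSeq_blockStart_add_eq_getD (by rwa [haba 0 rfl rfl rfl])]
  exact congrArg uSeq (zero_add s)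

def IsRotatedPrefixAt (i L : ℕ) : Prop :=
  ∃ r, ∀ j < L, uSeq (i + j) = uSeq ((r + j) % L)

theorem periodize_map_range (f : ℕ → Bool) {L : ℕ} (hL : 0 < L) (n : ℤ) :
    periodize ((range L).map f) n = f (n % L).toNat := by
  have hlt : (n % L).toNat < L := by
    have := Int.emod_lt_of_pos n (Int.natCast_pos.mpr hL)
    omega
  rw [periodize, length_map, length_range, getD_eq_getElem _ _ (by simpa using hlt)]
  simp

theorem repeatable_of_isRotatedPrefixAt {i L : ℕ} (h : IsRotatedPrefixAt i L) :
    Repeatable ((range L).map fun j => uSeq (i + j)) := by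
  obtain ⟨r, hr⟩ := h
  refine ⟨r, fun n => ?_⟩
  rcases L.eq_zero_or_pos with rfl | hL
  · rfl
  rw [length_map, length_range, periodize_map_range _ hL, periodize_map_range _ hL,
    hr _ (by have := Int.emod_lt_of_pos n (Int.natCast_pos.mpr hL); omega)]
  congr 1
  have hnonneg : 0 ≤ n % L := Int.emod_nonneg n (by omega)
  have : (((r + (n % L).toNat) % L : ℕ) : ℤ) = (n + r) % L := by
    push_cast [Int.toNat_of_nonneg hnonneg]
    rw [Int.add_emod, Int.emod_emod_of_dvd n dvd_rfl, ← Int.add_emod, add_comm]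
  omega

theorem isRotatedPrefixAt_of_aba {n m s : ℕ} (h₀ : uSeq m = true) (h₁ : uSeq (m + 1) = false)
    (h₂ : uSeq (m + 2) = true) (hs : s + 1 < Nat.fib (n + 3) + Nat.fib (n + 2)) :
    IsRotatedPrefixAt (blockStart n m + s) (Nat.fib (n + 3)) := by
  have hfib : Nat.fib (n + 4) = Nat.fib (n + 2) + Nat.fib (n + 3) := Nat.fib_add_two
  refine ⟨s, fun j hj => ?_⟩
  rw [add_assoc, uSeq_blockStart_add_of_aba h₀ h₁ h₂ (by omega),
    uSeq_eq_uSeq_mod (n := n) (by omega)]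

theorem isRotatedPrefixAt_or (n i : ℕ) :
    IsRotatedPrefixAt i (Nat.fib (n + 3)) ∨ IsRotatedPrefixAt i (Nat.fib (n + 2)) := by
  have hfib : Nat.fib (n + 4) = Nat.fib (n + 2) + Nat.fib (n + 3) := Nat.fib_add_two
  have hpos : 0 < Nat.fib (n + 2) := Nat.fib_pos.mpr (by omega)
  have hle : Nat.fib (n + 2) ≤ Nat.fib (n + 3) := Nat.fib_mono (by omega)
  obtain ⟨m, hm, hm'⟩ := exists_blockStart_le_lt n i
  rw [blockStart_add_one] at hm'
  obtain ⟨r, rfl⟩ := Nat.exists_eq_add_of_le hm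
  cases h₀ : uSeq m with
  | true =>
    rw [if_pos h₀] at hm'
    left
    cases h₁ : uSeq (m + 1) with
    | true =>
      exact ⟨r, fun j hj => by rw [add_assoc, uSeq_blockStart_add_of_aa h₀ h₁ (by omega)]⟩
    | false =>
      exact isRotatedPrefixAt_of_aba h₀ h₁ (uSeq_add_one_of_eq_false h₁) (by omega)
  | false =>
    rw [h₀, if_neg (by simp)] at hm'
    obtain ⟨m, rfl, hprev⟩ := exists_eq_add_one_of_uSeq_eq_false h₀
    have h₂ := uSeq_add_one_of_eq_false h₀
    have hstart : blockStart n (m + 1) = blockStart n m + Nat.fib (n + 3) := by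
      rw [blockStart_add_one, if_pos hprev]
    by_cases hr : r + 1 < Nat.fib (n + 2)
    · left
      rw [hstart, add_assoc]
      exact isRotatedPrefixAt_of_aba hprev h₀ h₂ (by omega)
    · -- the factor starts at the last letter of a block `S^n(a)`, followed by `S^(n+1)(a)`
      right
      refine ⟨Nat.fib (n + 2) - 1, fun j hj => ?_⟩
      rcases j with _ | j
      · rw [add_zero, uSeq_blockStart_add (by simp [length_fibBlock, h₀]; omega), add_zero,
          Nat.mod_eq_of_lt (by omega), show r = Nat.fib (n + 2) - 1 by omega]
      · have hnext : blockStart n (m + 1 + 1) = blockStart n (m + 1) + r + 1 := by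
          rw [blockStart_add_one n (m + 1), if_neg (by simp [h₀])]; omega
        rw [show blockStart n (m + 1) + r + (j + 1) = blockStart n (m + 1 + 1) + j by omega,
          uSeq_blockStart_add (by simp [length_fibBlock, h₂]; omega),
          show Nat.fib (n + 2) - 1 + (j + 1) = j + Nat.fib (n + 2) by omega, Nat.add_mod_right,
          Nat.mod_eq_of_lt (by omega)]

/-- Let `w = w₁ w₂` be a subword of `u` with `|w| = F_k ≥ 2` and
`|w₁| = F_{k-1}` (Fibonacci numbers with the convention `F₁ = 1`, `F₂ = 2`, i.e.
`F_k = Nat.fib (k+1)`).  Then either `w` is repeatable or `w₁` is repeatable. -/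
theorem stmt12 (k : ℕ) (hk : 2 ≤ k) (w₁ w₂ : List Bool)
    (hlen : (w₁ ++ w₂).length = Nat.fib (k + 1))
    (hlen1 : w₁.length = Nat.fib k)
    (hsub : subwordOfU (w₁ ++ w₂)) :
    Repeatable (w₁ ++ w₂) ∨ Repeatable w₁ := by
  obtain ⟨n, rfl⟩ : ∃ n, k = n + 2 := ⟨k - 2, by omega⟩
  obtain ⟨i, hw⟩ := hsub
  rw [hlen] at hw
  have hw₁ : w₁ = (range (Nat.fib (n + 2))).map fun j => uSeq (i + j) := by
    rw [← take_left' hlen1, hw, ← map_take, take_range,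
      Nat.min_eq_left (Nat.fib_mono (by omega))]
  rcases isRotatedPrefixAt_or n i with h | h
  · exact .inl (hw ▸ repeatable_of_isRotatedPrefixAt h)
  · exact .inr (hw₁ ▸ repeatable_of_isRotatedPrefixAt h)
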